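/- arXiv:2410.07007 — 2 statements merged into one kernel-verified Lean document; each statement's English description precedes it below -/
import Mathlib

section
/- With P_n(x) = det(M_n(x)) as above, for all n > 1: P_{2n}(x) + x^{2n} = P_n(x)·(P_n(x) − x²·P_{n−2}(x)). -/
open Matrix Polynomial

noncomputable def Mmat (n : ℕ) (x : ℂ) : Matrix (Fin n) (Fin n) ℂ :=
  Matrix.of fun i j =>
    if (i : ℕ) = (j : ℕ) then 1
    else if (i : ℕ) + 1 = (j : ℕ) ∨ (j : ℕ) + 1 = (i : ℕ) then x else 0

noncomputable def P (n : ℕ) (x : ℂ) : ℂ := (Mmat n x).det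

lemma Mmat_apply (n : ℕ) (x : ℂ) (i j : Fin n) :
    Mmat n x i j = if (i : ℕ) = (j : ℕ) then 1
      else if (i : ℕ) + 1 = (j : ℕ) ∨ (j : ℕ) + 1 = (i : ℕ) then x else 0 := rfl

lemma P_rec (n : ℕ) (x : ℂ) : P (n + 2) x = P (n + 1) x - x ^ 2 * P n x := by
  rw [P, Matrix.det_succ_row_zero, Fin.sum_univ_succ, Fin.sum_univ_succ]
  have hz : ∀ j : Fin n, Mmat (n+2) x 0 j.succ.succ = 0 := by
    intro j
    rw [Mmat_apply]
    have : (j.succ.succ : Fin (n+2)) = (⟨(j:ℕ)+2, by omega⟩ : Fin (n+2)) := by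
      ext; simp
    rw [this]
    simp only [Fin.val_zero]
    split_ifs <;> simp_all <;> omega
  rw [Finset.sum_eq_zero (fun j _ => by rw [hz j]; ring)]
  have h0 : Mmat (n+2) x 0 0 = 1 := by rw [Mmat_apply]; simp
  have h1 : Mmat (n+2) x 0 1 = x := by
    rw [Mmat_apply]; norm_num
  have hsub0 : (Mmat (n+2) x).submatrix Fin.succ ((0 : Fin (n+2)).succAbove) = Mmat (n+1) x := by
    ext i j
    rw [Fin.succAbove_zero, Matrix.submatrix_apply, Mmat_apply, Mmat_apply]
    simp [Fin.val_succ]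
  -- second minor
  have hsub1 : ((Mmat (n+2) x).submatrix Fin.succ ((1 : Fin (n+2)).succAbove)).det
      = x * P n x := by
    set B := (Mmat (n+2) x).submatrix Fin.succ ((1 : Fin (n+2)).succAbove) with hB
    rw [Matrix.det_succ_column_zero, Fin.sum_univ_succ]
    have hB0 : B 0 0 = x := by
      rw [hB, Matrix.submatrix_apply]
      have : (1 : Fin (n+2)).succAbove 0 = 0 := by
        simp [Fin.succAbove]
      rw [this, Mmat_apply]
      norm_num
    have hBz : ∀ i : Fin n, B i.succ 0 = 0 := by
      intro i
      rw [hB, Matrix.submatrix_apply]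
      have h1 : (1 : Fin (n+2)).succAbove 0 = 0 := by simp [Fin.succAbove]
      rw [h1, Mmat_apply]
      simp only [Fin.val_succ, Fin.val_zero]
      split_ifs <;> simp_all <;> omega
    rw [Finset.sum_eq_zero (fun i _ => by rw [hBz i]; ring)]
    have hBsub : B.submatrix ((0 : Fin (n+1)).succAbove) Fin.succ = Mmat n x := by
      ext i j
      rw [Fin.succAbove_zero, hB, Matrix.submatrix_apply, Matrix.submatrix_apply]
      have hj : (((1 : Fin (n+2)).succAbove j.succ : Fin (n+2)) : ℕ) = (j : ℕ) + 2 := by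
        rw [Fin.succAbove]
        rw [if_neg]
        · simp
        · simp [Fin.lt_def]
      rw [Mmat_apply, Mmat_apply]
      simp only [Fin.val_succ, hj]
      congr 1
      · simp only [eq_iff_iff]; omega
      · congr 1; simp only [eq_iff_iff]; omega
    rw [hBsub, hB0]
    simp [P]
  simp only [Fin.succ_zero_eq_one]
  rw [hsub0, hsub1, h0, h1]
  simp [P]
  ring

lemma P_zero (x : ℂ) : P 0 x = 1 := by simp [P]

lemma P_one (x : ℂ) : P 1 x = 1 := by
  simp [P, Matrix.det_fin_one, Mmat_apply]

lemma P_add (x : ℂ) (m n : ℕ) :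
    P (m + n + 2) x = P (m + 1) x * P (n + 1) x - x ^ 2 * P m x * P n x := by
  induction n using Nat.twoStepInduction generalizing m with
  | zero => rw [P_rec, P_one, P_zero]; ring
  | one =>
      have h := P_rec (m + 1) x
      rw [show m + 1 + 2 = m + 3 from rfl] at h
      rw [show m + 1 + 1 = m + 2 from rfl] at h
      rw [show m + 1 + 2 = m + 3 from rfl, h, P_rec m x, P_rec 0 x, P_one, P_zero]
      ring
  | more n ih ih2 =>
      have e : m + (n + 2) + 2 = (m + n + 2) + 2 := by ring
      rw [e, P_rec, show m + n + 2 + 1 = m + (n + 1) + 2 from by ring, ih2, ih,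
        show n + 2 + 1 = (n + 1) + 2 from by ring, P_rec (n + 1) x, P_rec n x]
      ring

lemma P_cat (x : ℂ) (n : ℕ) :
    P (n + 2) x * P n x - P (n + 1) x ^ 2 = -(x ^ 2) ^ (n + 1) := by
  induction n with
  | zero => rw [P_rec, P_zero, P_one]; ring
  | succ n ih =>
      rw [P_rec (n+1) x, P_rec n x] 
      rw [P_rec n x] at ih
      linear_combination x ^ 2 * ih
      
theorem P_even_plus_power (n : ℕ) (hn : 1 < n) (x : ℂ) :
    P (2 * n) x + x ^ (2 * n) = P n x * (P n x - x ^ 2 * P (n - 2) x) := by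
  obtain ⟨k, rfl⟩ : ∃ k, n = k + 2 := ⟨n - 2, by omega⟩
  have hadd := P_add x (k + 1) (k + 1)
  rw [show 2 * (k + 2) = k + 1 + (k + 1) + 2 from by ring, hadd]
  have hcat := P_cat x k
  rw [show k + 2 - 2 = k from by omega]
  rw [show k + 1 + (k + 1) + 2 = 2 * (k + 2) from by ring,
    show k + 1 + 1 = k + 2 from rfl]
  have hx : x ^ (2 * (k + 2)) = x ^ 2 * (x ^ 2) ^ (k + 1) := by ring
  rw [hx]
  linear_combination x ^ 2 * hcat
end

section
/- Let n = 2m be even. Together, the polynomials P_{m−2}(x) and P_{m−1}(x) − x²·P_{m−3}(x) have exactly 2m−4 distinct complex roots, and no root in common; their product equals P_{2m−3}(x). -/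
open Matrix Polynomial

noncomputable def MmatP (n : ℕ) : Matrix (Fin n) (Fin n) (Polynomial ℂ) :=
  Matrix.of fun i j =>
    if (i : ℕ) = (j : ℕ) then 1
    else if (i : ℕ) + 1 = (j : ℕ) ∨ (j : ℕ) + 1 = (i : ℕ) then Polynomial.X else 0

noncomputable def Ppoly (n : ℕ) : Polynomial ℂ := (MmatP n).det

lemma Ppoly_rec (n : ℕ) : Ppoly (n+2) = Ppoly (n+1) - X^2 * Ppoly n := by
  have h1 : (MmatP (n+2)).submatrix Fin.succ Fin.succ = MmatP (n+1) := by
    ext i j; simp [MmatP, Matrix.submatrix, Fin.val_succ]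
  set B : Matrix (Fin (n+1)) (Fin (n+1)) (Polynomial ℂ) :=
    (MmatP (n+2)).submatrix Fin.succ (Fin.succAbove 1) with hB
  have h2 : B.submatrix Fin.succ Fin.succ = MmatP n := by
    ext i j
    simp [hB, MmatP, Matrix.submatrix, Fin.val_succ, Fin.succAbove, Fin.lt_iff_val_lt_val]
  have hrow : Ppoly (n+2) = Ppoly (n+1) - X * B.det := by
    rw [Ppoly, Matrix.det_succ_row_zero, Fin.sum_univ_succ, Fin.sum_univ_succ]
    have hz : ∀ j : Fin n, MmatP (n+2) 0 j.succ.succ = 0 := by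
      intro j; simp [MmatP]
    simp only [hz]
    have e00 : MmatP (n+2) 0 0 = 1 := by simp [MmatP]
    have e01 : MmatP (n+2) 0 (0 : Fin (n+1)).succ = X := by
      simp [MmatP]
    rw [e00, e01]
    simp only [Fin.succAbove_zero, h1]
    rw [← Ppoly]
    have hs01 : (Fin.succ (0 : Fin (n+1))) = (1 : Fin (n+2)) := rfl
    rw [hs01, ← hB]
    simp
    ring
  have hcol : B.det = X * Ppoly n := by
    rw [Matrix.det_succ_column_zero, Fin.sum_univ_succ]
    have hz : ∀ i : Fin n, B i.succ 0 = 0 := by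
      intro i
      simp [hB, MmatP, Matrix.submatrix, Fin.succAbove, Fin.val_succ, Fin.lt_iff_val_lt_val]
    have e0 : B 0 0 = X := by
      simp [hB, MmatP, Matrix.submatrix, Fin.succAbove, Fin.lt_iff_val_lt_val]
    simp only [hz, e0]
    rw [Fin.succAbove_zero, h2, ← Ppoly]
    simp
  rw [hrow, hcol]
  ring

lemma Ppoly_zero : Ppoly 0 = 1 := Matrix.det_fin_zero

lemma Ppoly_one : Ppoly 1 = 1 := by rw [Ppoly, Matrix.det_fin_one]; rfl

lemma Ppoly_add (a b : ℕ) :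
    Ppoly (a + b + 2) = Ppoly (a+1) * Ppoly (b+1) - X^2 * Ppoly a * Ppoly b := by
  induction b using Nat.twoStepInduction with
  | zero =>
      rw [Ppoly_rec a, Ppoly_one, Ppoly_zero]; ring
  | one =>
      have e : a + 1 + 2 = (a+1) + 2 := by omega
      rw [e, Ppoly_rec (a+1), Ppoly_rec a, show (2:ℕ) = 0 + 2 from rfl, Ppoly_rec 0,
        Ppoly_one, Ppoly_zero]
      ring
  | more b ih1 ih2 =>
      have e : a + (b + 2) + 2 = (a + b + 2) + 2 := by omega
      rw [e, Ppoly_rec (a+b+2), show a+b+2+1 = a+(b+1)+2 from by omega, ih2, ih1]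
      rw [show b+1+1 = b+2 from rfl, show b+2+1 = b+1+2 from rfl, Ppoly_rec (b+1),
        show b+1+1 = b+2 from rfl, Ppoly_rec b]
      ring

lemma Ppoly_deg (k : ℕ) :
    (Ppoly (2*k)).natDegree ≤ 2*k ∧ (Ppoly (2*k+1)).natDegree ≤ 2*k := by
  induction k with
  | zero => simp [Ppoly_zero, Ppoly_one]
  | succ k ih =>
      obtain ⟨h1, h2⟩ := ih
      have key : ∀ n : ℕ, (Ppoly n).natDegree ≤ 2*k → (Ppoly (n+1)).natDegree ≤ 2*k+2 →
          (Ppoly (n+2)).natDegree ≤ 2*k+2 := by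
        intro n hn hn1
        rw [Ppoly_rec]
        refine le_trans (natDegree_sub_le _ _) (max_le hn1 ?_)
        refine le_trans (natDegree_mul_le) ?_
        have : (X^2 : Polynomial ℂ).natDegree = 2 := natDegree_X_pow 2
        omega
      have ha' : (Ppoly (2*k+2)).natDegree ≤ 2*k+2 := key (2*k) h1 (h2.trans (by omega))
      have hb' : (Ppoly (2*k+1+2)).natDegree ≤ 2*k+2 :=
        key (2*k+1) h2 (by rw [show 2*k+1+1 = 2*k+2 from rfl]; exact ha')
      refine ⟨?_, ?_⟩
      · rw [show 2*(k+1) = 2*k+2 from by ring]; exact ha'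
      · rw [show 2*(k+1) = 2*k+2 from by ring, show 2*k+2+1 = 2*k+1+2 from by ring]; exact hb'

lemma Ppoly_eval_zero (n : ℕ) : (Ppoly n).eval 0 = 1 := by
  induction n using Nat.twoStepInduction with
  | zero => simp [Ppoly_zero]
  | one => simp [Ppoly_one]
  | more n ih1 ih2 => simp [Ppoly_rec, ih1, ih2]

lemma Ppoly_ne_zero (n : ℕ) : Ppoly n ≠ 0 := by
  intro h
  have := Ppoly_eval_zero n
  rw [h] at this; simp at this

lemma Ppoly_eval_cos (n : ℕ) (θ : ℝ) (hs : Real.sin θ ≠ 0) (hc : Real.cos θ ≠ 0) :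
    (Ppoly n).eval ((1 / (2 * Real.cos θ) : ℝ) : ℂ) =
      ((Real.sin (((n:ℝ)+1) * θ) / (Real.sin θ * (2 * Real.cos θ)^n) : ℝ) : ℂ) := by
  induction n using Nat.twoStepInduction with
  | zero => simp [Ppoly_zero, hs]
  | one =>
      have hr : Real.sin ((((1:ℕ):ℝ)+1) * θ) / (Real.sin θ * (2*Real.cos θ)^1) = 1 := by
        push_cast
        rw [show ((1:ℝ)+1)*θ = 2*θ from by ring, Real.sin_two_mul]
        field_simp
      rw [Ppoly_one, eval_one, hr]
      norm_num
  | more n ih1 ih2 =>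
      have key : Real.sin (((n:ℝ)+3)*θ) =
          2*Real.cos θ * Real.sin (((n:ℝ)+2)*θ) - Real.sin (((n:ℝ)+1)*θ) := by
        have h1 := Real.sin_add (((n:ℝ)+2)*θ) θ
        have h2 := Real.sin_sub (((n:ℝ)+2)*θ) θ
        have e1 : ((n:ℝ)+3)*θ = ((n:ℝ)+2)*θ + θ := by ring
        have e2 : ((n:ℝ)+1)*θ = ((n:ℝ)+2)*θ - θ := by ring
        rw [e1, e2, h1, h2]; ring
      rw [Ppoly_rec]
      simp only [eval_sub, eval_mul, eval_pow, eval_X, ih1, ih2]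
      have hR : Real.sin ((((n+2:ℕ):ℝ)+1)*θ) / (Real.sin θ * (2*Real.cos θ)^(n+2)) =
          Real.sin ((((n+1:ℕ):ℝ)+1)*θ) / (Real.sin θ * (2*Real.cos θ)^(n+1)) -
          (1/(2*Real.cos θ))^2 * (Real.sin (((n:ℝ)+1)*θ) / (Real.sin θ * (2*Real.cos θ)^n)) := by
        push_cast
        rw [show ((n:ℝ)+2+1) = (n:ℝ)+3 from by ring, show ((n:ℝ)+1+1) = (n:ℝ)+2 from by ring, key]
        field_simp
        ring
      rw [hR]
      push_cast
      ring

theorem even_factor_roots (m : ℕ) (hm : 3 ≤ m) :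
    Ppoly (m - 2) * (Ppoly (m - 1) - Polynomial.X ^ 2 * Ppoly (m - 3)) = Ppoly (2 * m - 3) ∧
    ((Ppoly (m - 2)).roots.toFinset ∪
      (Ppoly (m - 1) - Polynomial.X ^ 2 * Ppoly (m - 3)).roots.toFinset).card = 2 * m - 4 ∧
    (Ppoly (m - 2)).roots.toFinset ∩
      (Ppoly (m - 1) - Polynomial.X ^ 2 * Ppoly (m - 3)).roots.toFinset = ∅ := by
  obtain ⟨M, rfl⟩ : ∃ M, m = M + 3 := ⟨m - 3, by omega⟩
  rw [show M + 3 - 2 = M + 1 from rfl, show M + 3 - 1 = M + 2 from rfl,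
    show M + 3 - 3 = M from by omega, show 2 * (M + 3) - 3 = 2*M+3 from by omega,
    show 2 * (M + 3) - 4 = 2*M+2 from by omega]
  have hfact : Ppoly (M+1) * (Ppoly (M+2) - X^2 * Ppoly M) = Ppoly (2*M+3) := by
    have h := Ppoly_add M (M+1)
    rw [show M + (M+1) + 2 = 2*M+3 from by omega, show M+1+1 = M+2 from rfl] at h
    rw [h]; ring
  set p := Ppoly (M+1) with hpdef
  set q := Ppoly (M+2) - X^2 * Ppoly M with hqdef
  have hPQne : Ppoly (2*M+3) ≠ 0 := Ppoly_ne_zero _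
  have hmul_ne : p * q ≠ 0 := hfact ▸ hPQne
  have hdeg : (Ppoly (2*M+3)).natDegree ≤ 2*M+2 := by
    have h := (Ppoly_deg (M+1)).2
    rw [show 2*(M+1) = 2*M+2 from by ring, show 2*M+2+1 = 2*M+3 from rfl] at h
    exact h
  have hunion : p.roots.toFinset ∪ q.roots.toFinset = (Ppoly (2*M+3)).roots.toFinset := by
    rw [← hfact, roots_mul hmul_ne, Multiset.toFinset_add]
  have hle : (Ppoly (2*M+3)).roots.toFinset.card ≤ 2*M+2 :=
    le_trans (Multiset.toFinset_card_le _) (le_trans (card_roots' _) hdeg)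
  -- explicit roots
  set θk : ℕ → ℝ := fun k => k * Real.pi / (2*M+4) with hθk
  set f : ℕ → ℂ := fun k => ((1 / (2 * Real.cos (θk k)) : ℝ) : ℂ) with hf
  set S : Finset ℕ := (Finset.Icc 1 (2*M+3)).erase (M+2) with hS
  have hcardS : S.card = 2*M+2 := by
    rw [hS, Finset.card_erase_of_mem (by simp [Finset.mem_Icc]; omega), Nat.card_Icc]
    omega
  have hπ := Real.pi_pos
  have hθmem : ∀ k ∈ S, 0 < θk k ∧ θk k < Real.pi := by
    intro k hk
    rw [hS, Finset.mem_erase, Finset.mem_Icc] at hk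
    obtain ⟨hkne, hk1, hk2⟩ := hk
    have hk1' : (1:ℝ) ≤ (k:ℝ) := by exact_mod_cast hk1
    have hk2' : (k:ℝ) < 2*M+4 := by
      have : k < 2*M+4 := by omega
      calc (k:ℝ) < ((2*M+4 : ℕ):ℝ) := by exact_mod_cast this
        _ = 2*M+4 := by push_cast; ring
    constructor
    · apply div_pos (by nlinarith) (by positivity)
    · rw [hθk]
      rw [div_lt_iff₀ (by positivity)]
      nlinarith
  have hcos_ne : ∀ k ∈ S, Real.cos (θk k) ≠ 0 := by
    intro k hk h0
    obtain ⟨hm1, hm2⟩ := hθmem k hk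
    have heq : θk k = Real.pi/2 := by
      refine Real.injOn_cos ⟨le_of_lt hm1, le_of_lt hm2⟩ ⟨by positivity, by linarith⟩ ?_
      rw [h0, Real.cos_pi_div_two]
    rw [hθk] at heq
    simp only at heq
    rw [div_eq_div_iff (by positivity) (by norm_num)] at heq
    have h3 : ((k:ℝ)*2 - (2*M+4)) * Real.pi = 0 := by linarith
    rcases mul_eq_zero.1 h3 with h4 | h4
    · have : (k:ℝ)*2 = ((2*M+4 : ℕ):ℝ) := by push_cast; linarith
      have : k*2 = 2*M+4 := by exact_mod_cast this
      rw [hS, Finset.mem_erase] at hk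
      omega
    · linarith
  have hsin_ne : ∀ k ∈ S, Real.sin (θk k) ≠ 0 := fun k hk =>
    ne_of_gt (Real.sin_pos_of_pos_of_lt_pi (hθmem k hk).1 (hθmem k hk).2)
  have hroot : ∀ k ∈ S, f k ∈ (Ppoly (2*M+3)).roots.toFinset := by
    intro k hk
    rw [Multiset.mem_toFinset, mem_roots hPQne]
    have h := Ppoly_eval_cos (2*M+3) (θk k) (hsin_ne k hk) (hcos_ne k hk)
    have hd4 : (2*(M:ℝ)+4) ≠ 0 := by positivity
    have hnum : Real.sin ((((2*M+3:ℕ):ℝ)+1) * θk k) = 0 := by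
      have e : (((2*M+3:ℕ):ℝ)+1) * θk k = k * Real.pi := by
        rw [hθk]
        push_cast
        field_simp
        ring
      rw [e]
      exact Real.sin_nat_mul_pi k
    rw [IsRoot, hf]
    simp only
    rw [h, hnum]
    simp
  have hnum' : True := trivial
  have hinj : Set.InjOn f S := by
    intro k hk k' hk' hEq
    have hc := hcos_ne k hk
    have hc' := hcos_ne k' hk'
    rw [hf] at hEq
    simp only at hEq
    have hre : (1 / (2*Real.cos (θk k)) : ℝ) = 1 / (2*Real.cos (θk k')) := by
      exact_mod_cast hEq
    have hcc : Real.cos (θk k) = Real.cos (θk k') := by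
      field_simp at hre
      linarith
    have hmm := hθmem k hk
    have hmm' := hθmem k' hk'
    have hθeq : θk k = θk k' :=
      Real.injOn_cos ⟨le_of_lt hmm.1, le_of_lt hmm.2⟩ ⟨le_of_lt hmm'.1, le_of_lt hmm'.2⟩ hcc
    rw [hθk] at hθeq
    simp only at hθeq
    rw [div_eq_div_iff (by positivity) (by positivity)] at hθeq
    have h1 : (k:ℝ) * Real.pi = (k':ℝ) * Real.pi :=
      mul_right_cancel₀ (by positivity) hθeq
    have : (k:ℝ) = (k':ℝ) := mul_right_cancel₀ Real.pi_ne_zero h1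
    exact_mod_cast this
  have hge : 2*M+2 ≤ (Ppoly (2*M+3)).roots.toFinset.card := by
    rw [← hcardS]
    exact Finset.card_le_card_of_injOn f hroot hinj
  have hcard : (Ppoly (2*M+3)).roots.toFinset.card = 2*M+2 := le_antisymm hle hge
  have hnodup : (Ppoly (2*M+3)).roots.Nodup := by
    have h1 : (Ppoly (2*M+3)).roots.dedup.card = (Ppoly (2*M+3)).roots.toFinset.card := rfl
    have h2 := card_roots' (Ppoly (2*M+3))
    have h3 : Multiset.card (Ppoly (2*M+3)).roots ≤ (Ppoly (2*M+3)).roots.dedup.card := by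
      rw [h1, hcard]; omega
    have h4 := Multiset.eq_of_le_of_card_le (Multiset.dedup_le _) h3
    rw [← h4]
    exact Multiset.nodup_dedup _
  refine ⟨hfact, ?_, ?_⟩
  · rw [hunion]; exact hcard
  · rw [Finset.eq_empty_iff_forall_notMem]
    intro z hz
    rw [Finset.mem_inter, Multiset.mem_toFinset, Multiset.mem_toFinset] at hz
    have hcount : 2 ≤ (Ppoly (2*M+3)).roots.count z := by
      rw [← hfact, roots_mul hmul_ne, Multiset.count_add]
      have c1 := Multiset.one_le_count_iff_mem.2 hz.1
      have c2 := Multiset.one_le_count_iff_mem.2 hz.2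
      omega
    have := Multiset.nodup_iff_count_le_one.mp hnodup z
    omega
end
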